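/- arXiv:1702.00669 — 3 statements merged into one kernel-verified Lean document; each statement's English description precedes it below -/
import Mathlib

section
/- Suppose f : [a,b] → ℝ is continuous and does not have a local strict maximum on (a,b). Then there exists c ∈ [a,b] such that f is non-increasing (antitone) on [a,c] and non-decreasing (monotone) on [c,b]. -/
open Topology Filter


theorem monotone_decomposition_of_no_local_strict_max (a b : ℝ) (f : ℝ → ℝ)
    (hab : a ≤ b) (hf : ContinuousOn f (Set.Icc a b))
    (hno : ¬ ∃ x a' b', a' ∈ Set.Ioo a b ∧ b' ∈ Set.Ioo a b ∧
      a' < x ∧ x < b' ∧ (∀ t ∈ Set.Ioo a' b', f t ≤ f x) ∧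
      max (f a') (f b') < f x) :
    ∃ c ∈ Set.Icc a b, AntitoneOn f (Set.Icc a c) ∧ MonotoneOn f (Set.Icc c b) := by
  -- Step 1: quasiconvexity
  have hQ : ∀ x y z : ℝ, x ∈ Set.Icc a b → z ∈ Set.Icc a b → x ≤ y → y ≤ z →
      f y ≤ max (f x) (f z) := by
    intro x y z hx hz hxy hyz
    by_contra hlt
    push_neg at hlt
    have hfx : f x < f y := lt_of_le_of_lt (le_max_left _ _) hlt
    have hfz : f z < f y := lt_of_le_of_lt (le_max_right _ _) hlt
    have hxy' : x < y := lt_of_le_of_ne hxy (by rintro rfl; exact lt_irrefl _ hfx)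
    have hyz' : y < z := lt_of_le_of_ne hyz (by rintro rfl; exact lt_irrefl _ hfz)
    have hxz : x < z := hxy'.trans hyz'
    have hIcc : Set.Icc x z ⊆ Set.Icc a b :=
      Set.Icc_subset_Icc hx.1 hz.2
    have hfc : ContinuousOn f (Set.Icc x z) := hf.mono hIcc
    obtain ⟨p, hp, hpmax⟩ := isCompact_Icc.exists_isMaxOn
      (Set.nonempty_Icc.2 hxz.le) hfc
    have hyp : f y ≤ f p := hpmax ⟨hxy, hyz⟩
    have hfxp : f x < f p := lt_of_lt_of_le hfx hyp
    have hfzp : f z < f p := lt_of_lt_of_le hfz hyp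
    have hxp : x < p := lt_of_le_of_ne hp.1 (by rintro rfl; exact lt_irrefl _ hfxp)
    have hpz : p < z := lt_of_le_of_ne hp.2 (by rintro rfl; exact lt_irrefl _ hfzp)
    -- find a' ∈ (x, p) with f a' < f p
    have hle1 : 𝓝[>] x ≤ 𝓝[Set.Icc x z] x := by
      refine le_trans (nhdsWithin_le_of_mem ?_) (nhdsWithin_mono _ Set.Ioo_subset_Icc_self)
      exact Ioo_mem_nhdsGT_of_mem ⟨le_refl x, hxz⟩
    have h1 : ∀ᶠ t in 𝓝[>] x, f t < f p :=
      ((hfc.continuousWithinAt ⟨le_refl x, hxz.le⟩).mono_left hle1).eventually_lt_const hfxp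
    have h2 : ∀ᶠ t in 𝓝[>] x, t ∈ Set.Ioo x p :=
      Ioo_mem_nhdsGT_of_mem ⟨le_refl x, hxp⟩
    obtain ⟨a', ha'f, ha'⟩ := (h1.and h2).exists
    -- find b' ∈ (p, z) with f b' < f p
    have hle2 : 𝓝[<] z ≤ 𝓝[Set.Icc x z] z := by
      refine le_trans (nhdsWithin_le_of_mem ?_) (nhdsWithin_mono _ Set.Ioo_subset_Icc_self)
      exact Ioo_mem_nhdsLT_of_mem ⟨hxz, le_refl z⟩
    have h3 : ∀ᶠ t in 𝓝[<] z, f t < f p :=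
      ((hfc.continuousWithinAt ⟨hxz.le, le_refl z⟩).mono_left hle2).eventually_lt_const hfzp
    have h4 : ∀ᶠ t in 𝓝[<] z, t ∈ Set.Ioo p z :=
      Ioo_mem_nhdsLT_of_mem ⟨hpz, le_refl z⟩
    obtain ⟨b', hb'f, hb'⟩ := (h3.and h4).exists
    exact hno ⟨p, a', b', ⟨lt_of_le_of_lt hx.1 ha'.1, lt_of_lt_of_le (ha'.2.trans hpz) hz.2⟩,
      ⟨lt_of_le_of_lt hx.1 (hxp.trans hb'.1), lt_of_lt_of_le hb'.2 hz.2⟩,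
      ha'.2, hb'.1,
      fun t ht => hpmax ⟨(ha'.1.trans ht.1).le, (ht.2.trans hb'.2).le⟩,
      max_lt ha'f hb'f⟩
  -- Step 2: pick global minimum
  obtain ⟨c, hc, hcmin⟩ := isCompact_Icc.exists_isMinOn (Set.nonempty_Icc.2 hab) hf
  refine ⟨c, hc, ?_, ?_⟩
  · intro u hu v hv huv
    have := hQ u v c ⟨hu.1, hu.2.trans hc.2⟩ hc huv hv.2
    have hcu : f c ≤ f u := hcmin ⟨hu.1, hu.2.trans hc.2⟩
    calc f v ≤ max (f u) (f c) := this
    _ = f u := max_eq_left hcu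
  · intro u hu v hv huv
    have := hQ c u v hc ⟨hc.1.trans hv.1, hv.2⟩ hu.1 huv
    have hcv : f c ≤ f v := hcmin ⟨hc.1.trans hv.1, hv.2⟩
    calc f u ≤ max (f c) (f v) := this
    _ = f v := max_eq_right hcv
end

section
/- Let f ∈ W^{1,1}(ℝⁿ) with Mf(x) > |f(x)|, Mf differentiable at x, and B ∈ 𝓑ₓ. If x ∈ B (x is in the interior of the maximizing ball), then DMf(x) = 0. -/
open MeasureTheory Metric
open scoped ENNReal Topology

noncomputable section

abbrev En (n : ℕ) : Type := EuclideanSpace ℝ (Fin n)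

/-- `Df` is the weak gradient of `f` on `ℝⁿ` (integration by parts against
smooth compactly supported test functions). -/
def IsWeakGradient {n : ℕ} (f : En n → ℝ) (Df : En n → En n) : Prop :=
  ∀ φ : En n → ℝ, ContDiff ℝ (⊤ : ℕ∞) φ → HasCompactSupport φ →
    ∀ v : En n, ∫ x, f x * fderiv ℝ φ x v = - ∫ x, (inner ℝ (Df x) v : ℝ) * φ x

/-- `f ∈ W^{1,1}(ℝⁿ)` with weak gradient `Df`. -/
def W11 {n : ℕ} (f : En n → ℝ) (Df : En n → En n) : Prop :=
  Integrable f ∧ Integrable Df ∧ IsWeakGradient f Df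

/-- The non-centered Hardy–Littlewood maximal function. -/
def maxFn {n : ℕ} (f : En n → ℝ) (x : En n) : ℝ :=
  sSup {c : ℝ | ∃ z : En n, ∃ r : ℝ, 0 < r ∧ x ∈ closedBall z r ∧
    c = ⨍ y in ball z r, |f y|}

theorem deriv_maxFn_eq_zero_of_mem_interior {n : ℕ}
    (f : En n → ℝ) (Df Dabs : En n → En n) (hf : W11 f Df)
    (habs : W11 (fun x => |f x|) Dabs)
    (x : En n) (hMx : |f x| < maxFn f x)
    (hdiff : DifferentiableAt ℝ (maxFn f) x)
    (z : En n) (r : ℝ) (hr : 0 < r)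
    (hB : (⨍ y in ball z r, |f y|) = maxFn f x)
    (hxB : x ∈ ball z r) :
    fderiv ℝ (maxFn f) x = 0 := by
  have h0 : 0 < maxFn f x := lt_of_le_of_lt (abs_nonneg _) hMx
  have hc : ContinuousAt (maxFn f) x := hdiff.continuousAt
  have hev : ∀ᶠ y in 𝓝 x, 0 < maxFn f y := hc (Ioi_mem_nhds h0)
  have hball : ∀ᶠ y in 𝓝 x, y ∈ ball z r := isOpen_ball.mem_nhds hxB
  have hmin : IsLocalMin (maxFn f) x := by
    filter_upwards [hev, hball] with y hy hyB
    have hmem : (⨍ w in ball z r, |f w|) ∈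
        {c : ℝ | ∃ z' : En n, ∃ r' : ℝ, 0 < r' ∧ y ∈ closedBall z' r' ∧
          c = ⨍ w in ball z' r', |f w|} :=
      ⟨z, r, hr, ball_subset_closedBall hyB, rfl⟩
    have hbdd : BddAbove {c : ℝ | ∃ z' : En n, ∃ r' : ℝ, 0 < r' ∧
        y ∈ closedBall z' r' ∧ c = ⨍ w in ball z' r', |f w|} := by
      by_contra h
      have : maxFn f y = 0 := Real.sSup_of_not_bddAbove h
      rw [this] at hy
      exact lt_irrefl _ hy
    calc maxFn f x = ⨍ w in ball z r, |f w| := hB.symm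
      _ ≤ maxFn f y := le_csSup hbdd hmem
  exact hmin.fderiv_eq_zero
end
end

section
/- Let f ∈ W^{1,1}(ℝⁿ) with Mf(x) > |f(x)|, Mf differentiable at x, x ∈ ∂B for B = B(z,r) ∈ 𝓑ₓ, and DMf(x) ≠ 0. Then DMf(x)/|DMf(x)| = (z - x)/|z - x|, i.e. the gradient of the maximal function points from x toward the center of the maximizing ball. -/
open MeasureTheory Metric
open scoped ENNReal Topology RealInnerProductSpace

noncomputable section

set_option maxHeartbeats 1000000 in
theorem grad_maxFn_points_toward_center {n : ℕ}
    (f : En n → ℝ) (Df Dabs : En n → En n) (hf : W11 f Df)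
    (habs : W11 (fun x => |f x|) Dabs)
    (x : En n) (hMx : |f x| < maxFn f x)
    (hdiff : DifferentiableAt ℝ (maxFn f) x)
    (z : En n) (r : ℝ) (hr : 0 < r) (hxB : x ∈ sphere z r)
    (hB : (⨍ y in ball z r, |f y|) = maxFn f x)
    (hne : gradient (maxFn f) x ≠ 0) :
    ‖gradient (maxFn f) x‖⁻¹ • gradient (maxFn f) x = ‖z - x‖⁻¹ • (z - x) := by
  classical
  set g : En n := gradient (maxFn f) x with hg
  set w : En n := z - x with hwdef
  have hwn : ‖w‖ = r := by
    rw [hwdef, ← dist_eq_norm]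
    rw [mem_sphere, dist_comm] at hxB
    exact hxB
  have hw0 : w ≠ 0 := by
    intro h; rw [h, norm_zero] at hwn; exact hr.ne hwn
  -- positivity of the maximal function at x
  have hpos : 0 < maxFn f x := lt_of_le_of_lt (abs_nonneg _) hMx
  -- positivity near x
  have hnear : ∀ᶠ y in 𝓝 x, 0 < maxFn f y :=
    continuousAt_const.eventually_lt hdiff.continuousAt hpos
  obtain ⟨ε, hε, hball⟩ := Metric.eventually_nhds_iff.mp hnear
  -- monotonicity: maxFn f x is a lower bound for maxFn at points of the closed ball near x
  have hmono : ∀ y : En n, y ∈ closedBall z r → dist y x < ε → maxFn f x ≤ maxFn f y := by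
    intro y hy hyx
    have hypos : 0 < maxFn f y := hball hyx
    have hbdd : BddAbove {c : ℝ | ∃ z' : En n, ∃ r' : ℝ, 0 < r' ∧ y ∈ closedBall z' r' ∧
        c = ⨍ u in ball z' r', |f u|} := by
      by_contra hb
      rw [maxFn, Real.sSup_of_not_bddAbove hb] at hypos
      exact lt_irrefl 0 hypos
    rw [← hB]
    exact le_csSup hbdd ⟨z, r, hr, hy, rfl⟩
  -- fderiv applied to v equals inner product with the gradient
  have hgrad : ∀ v : En n, fderiv ℝ (maxFn f) x v = ⟪g, v⟫ := by
    intro v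
    have h1 : HasFDerivAt (maxFn f) (InnerProductSpace.toDual ℝ (En n) g) x :=
      hdiff.hasGradientAt.hasFDerivAt
    rw [h1.fderiv]
    simp [InnerProductSpace.toDual_apply_apply]
  -- directional derivatives are nonnegative in directions pointing into the ball
  have hkey : ∀ v : En n, 0 < ⟪w, v⟫ → 0 ≤ ⟪g, v⟫ := by
    intro v hv
    have hvn : 0 < ‖v‖ := by
      rcases eq_or_lt_of_le (norm_nonneg v) with h | h
      · exfalso
        have : v = 0 := by rwa [eq_comm, norm_eq_zero] at h
        rw [this, inner_zero_right] at hv; exact lt_irrefl 0 hv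
      · exact h
    set t0 : ℝ := min (⟪w, v⟫ / ‖v‖ ^ 2) (ε / (2 * ‖v‖)) with ht0def
    have ht0 : 0 < t0 :=
      lt_min (div_pos hv (by positivity)) (div_pos hε (by positivity))
    -- points x + t • v for 0 < t ≤ t0 are in the closed ball and near x
    have hmem : ∀ t : ℝ, 0 < t → t ≤ t0 → maxFn f x ≤ maxFn f (x + t • v) := by
      intro t ht ht'
      have ht1 : t ≤ ⟪w, v⟫ / ‖v‖ ^ 2 := le_trans ht' (min_le_left _ _)
      have ht2 : t ≤ ε / (2 * ‖v‖) := le_trans ht' (min_le_right _ _)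
      apply hmono
      · rw [mem_closedBall, dist_eq_norm]
        have hexp : x + t • v - z = t • v - w := by
          rw [hwdef]; abel
        rw [hexp]
        have hsq : ‖t • v - w‖ ^ 2 = t ^ 2 * ‖v‖ ^ 2 - 2 * (t * ⟪w, v⟫) + r ^ 2 := by
          have h1 : ⟪t • v, w⟫ = t * ⟪w, v⟫ := by
            rw [real_inner_smul_left, real_inner_comm]
          rw [norm_sub_sq_real, h1, norm_smul, hwn, Real.norm_eq_abs, abs_of_pos ht, mul_pow]
        have htv : t * ‖v‖ ^ 2 ≤ ⟪w, v⟫ := by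
          rwa [le_div_iff₀ (by positivity)] at ht1
        nlinarith [norm_nonneg (t • v - w), hsq, htv, ht]
      · rw [dist_eq_norm]
        have : x + t • v - x = t • v := by abel
        rw [this, norm_smul, Real.norm_eq_abs, abs_of_pos ht]
        rw [le_div_iff₀ (by positivity)] at ht2
        nlinarith
    -- the derivative of t ↦ maxFn f (x + t • v) at 0 is ⟪g, v⟫
    have hline : HasDerivAt (fun t : ℝ => maxFn f (x + t • v)) (⟪g, v⟫) 0 := by
      have h2 : HasDerivAt (fun t : ℝ => x + t • v) v 0 := by
        simpa using ((hasDerivAt_id (0 : ℝ)).smul_const v).const_add x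
      have h3 : HasFDerivAt (maxFn f) (fderiv ℝ (maxFn f) x) x := hdiff.hasFDerivAt
      have h4 : HasFDerivAt (maxFn f) (fderiv ℝ (maxFn f) x) ((fun t : ℝ => x + t • v) 0) := by
        simpa using h3
      have := h4.comp_hasDerivAt 0 h2
      rwa [hgrad v] at this
    have hslope := hasDerivAt_iff_tendsto_slope.mp hline
    have hslope' : Filter.Tendsto (slope (fun t : ℝ => maxFn f (x + t • v)) 0) (𝓝[>] (0:ℝ))
        (𝓝 (⟪g, v⟫)) :=
      hslope.mono_left (nhdsWithin_mono 0 (fun t ht => ne_of_gt ht))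
    refine ge_of_tendsto hslope' ?_
    filter_upwards [Ioc_mem_nhdsGT_of_mem ⟨le_refl (0:ℝ), ht0⟩] with t ht
    obtain ⟨ht1, ht2⟩ := ht
    rw [slope_def_field]
    have h5 := hmem t ht1 ht2
    have : maxFn f (x + (0:ℝ) • v) = maxFn f x := by simp
    rw [sub_zero, this]
    exact div_nonneg (by linarith) ht1.le
  -- extend to closed half-space
  have hkey' : ∀ v : En n, 0 ≤ ⟪w, v⟫ → 0 ≤ ⟪g, v⟫ := by
    intro v hv
    rcases eq_or_lt_of_le hv with h | h
    · by_contra hneg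
      push_neg at hneg
      have hww : 0 < ⟪w, w⟫ := by
        rw [real_inner_self_eq_norm_sq]
        exact pow_pos (norm_pos_iff.mpr hw0) 2
      rcases le_or_gt (⟪g, w⟫) 0 with hgw | hgw
      · have := hkey (v + w) (by rw [inner_add_right, ← h, zero_add]; exact hww)
        rw [inner_add_right] at this
        linarith
      · set a : ℝ := ⟪g, v⟫ with ha
        set b : ℝ := ⟪g, w⟫ with hb
        set δ : ℝ := -a / (2 * b) with hδ
        have hδpos : 0 < δ := div_pos (by linarith) (by linarith)
        have h3 := hkey (v + δ • w) (by
          rw [inner_add_right, real_inner_smul_right, ← h, zero_add]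
          exact mul_pos hδpos hww)
        rw [inner_add_right, real_inner_smul_right, ← ha, ← hb] at h3
        have h2 : δ * b = -a / 2 := by
          rw [hδ]; field_simp
        linarith
    · exact hkey v h
  -- conclude g is a positive multiple of w
  set lam : ℝ := ⟪g, w⟫ / ‖w‖ ^ 2 with hlam
  set p : En n := g - lam • w with hp
  have hwn2 : ‖w‖ ^ 2 ≠ 0 := pow_ne_zero 2 (norm_ne_zero_iff.mpr hw0)
  have hwp : ⟪w, p⟫ = 0 := by
    have h1 : ⟪w, p⟫ = ⟪w, g⟫ - lam * ⟪w, w⟫ := by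
      rw [hp, inner_sub_right, real_inner_smul_right]
    rw [h1, real_inner_self_eq_norm_sq, real_inner_comm g w, hlam,
      div_mul_cancel₀ _ hwn2, sub_self]
  have hgp : ⟪g, p⟫ = ‖p‖ ^ 2 := by
    have hgdecomp : g = p + lam • w := by rw [hp]; abel
    calc ⟪g, p⟫ = ⟪p, p⟫ + lam * ⟪w, p⟫ := by
          conv_lhs => rw [hgdecomp]
          rw [inner_add_left, real_inner_smul_left]
      _ = ‖p‖ ^ 2 := by rw [hwp, real_inner_self_eq_norm_sq]; ring
  have hp0 : p = 0 := by
    have h1 := hkey' p (le_of_eq hwp.symm)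
    have h2 := hkey' (-p) (by rw [inner_neg_right, hwp]; simp)
    rw [inner_neg_right, hgp] at h2
    rw [hgp] at h1
    have : ‖p‖ ^ 2 = 0 := le_antisymm (by linarith) (by positivity)
    have : ‖p‖ = 0 := by nlinarith [norm_nonneg p]
    rwa [norm_eq_zero] at this
  have hgeq : g = lam • w := by
    have := hp0
    rw [hp, sub_eq_zero] at this
    exact this
  have hlampos : 0 < lam := by
    have hwwpos : 0 < ⟪w, w⟫ := by
      rw [real_inner_self_eq_norm_sq]
      exact pow_pos (norm_pos_iff.mpr hw0) 2
    rcases eq_or_lt_of_le (hkey' w hwwpos.le) with h | h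
    · exfalso
      apply hne
      rw [hgeq, hlam, ← h]
      simp
    · exact div_pos h (pow_pos (norm_pos_iff.mpr hw0) 2)
  rw [hgeq, norm_smul, Real.norm_eq_abs, abs_of_pos hlampos, smul_smul]
  congr 1
  rw [mul_inv]
  field_simp
end
end
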